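/- (Lack of null controllability in density at small time.) Let 0 < T < 2π/ū. Then there is no constant C > 0 such that for every finitely supported family (a_n) of complex numbers indexed by the nonzero integers, Σ_n |a_n|² ≤ C·∫₀ᵀ | Σ_n a_n·ρ̄ν₂ⁿ·e^{ν_n^h(T−t)} |² dt. (This expresses that the observability inequality characterizing null controllability of the linearized barotropic system in (L̇²(0,2π))² with one boundary control in density fails on the hyperbolic family for T < 2π/ū.) -/

import Mathlib

/-!
For large `n` the hyperbolic eigenvalues are `ν_n^h = -bρ̄/μ₀ + O(n⁻²) + iūn`, and `|ν₂ⁿ|` stays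
bounded. Take `a_{N+m} = 2^{-K} C(K,m) (-e^{-iūT/2})^m / (ρ̄ν₂^{N+m})` for `0 ≤ m ≤ K`. At
`τ = T - t` the observed signal is then, up to an error `O(T/N²)`, the damped binomial polynomial
`e^{(-bρ̄/μ₀ + iūN)τ} ((1 - e^{iū(τ - T/2)})/2)^K`, of modulus at most
`|sin(ū(τ - T/2)/2)|^K ≤ sin(ūT/4)^K`. Since `ūT < 2π`, `q = sin(ūT/4) < 1`: for `N` large the
right-hand side of the inequality is `O(q^{2K})`, whereas by Cauchy–Schwarz the left-hand side is at
least a multiple of `1/(K+1)`, and `K → ∞` gives a contradiction.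
-/

open scoped Classical
open Complex

/-- The hyperbolic branch of eigenvalues of the adjoint operator of the linearized
barotropic compressible Navier–Stokes system. -/
noncomputable def nuH (ρ u b μ : ℝ) (n : ℤ) : ℂ :=
  if 4 * b * ρ ≤ μ ^ 2 * (n : ℝ) ^ 2 then
    (((-(μ * (n : ℝ) ^ 2) + |(n : ℝ)| * Real.sqrt (μ ^ 2 * (n : ℝ) ^ 2 - 4 * b * ρ)) / 2 : ℝ) : ℂ)
      + Complex.I * ((u * (n : ℝ) : ℝ) : ℂ)
  else
    ((-(μ * (n : ℝ) ^ 2) / 2 : ℝ) : ℂ)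
      + Complex.I * ((u * (n : ℝ) + (n : ℝ) / 2 * Real.sqrt (4 * b * ρ - μ ^ 2 * (n : ℝ) ^ 2) : ℝ) : ℂ)

/-- `ν₂ⁿ := ν_n^h / (i n)`. -/
noncomputable def nu2 (ρ u b μ : ℝ) (n : ℤ) : ℂ := nuH ρ u b μ n / (Complex.I * (n : ℂ))

theorem Complex.norm_exp_sub_exp_le_of_re_nonpos {z w : ℂ} (hz : z.re ≤ 0) (hw : w.re ≤ 0) :
    ‖exp z - exp w‖ ≤ ‖z - w‖ := by
  simpa using (convex_halfSpace_re_le (0 : ℝ)).norm_image_sub_le_of_norm_deriv_le (C := 1)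
    (fun _ _ => differentiableAt_exp) (fun x hx => by
      rw [Complex.deriv_exp, norm_exp]; exact Real.exp_le_one_iff.2 hx) hw hz

theorem sum_range_choose_div_mul_pow {𝕜 : Type*} [Field 𝕜] (K : ℕ) (z : 𝕜) :
    ∑ m ∈ Finset.range (K + 1), (K.choose m / 2 ^ K : 𝕜) * z ^ m = ((1 + z) / 2) ^ K := by
  rw [div_pow, add_comm (1 : 𝕜), add_pow, Finset.sum_div]
  refine Finset.sum_congr rfl fun m _ => ?_
  ring

theorem sum_range_choose_div_two_pow (K : ℕ) :
    ∑ m ∈ Finset.range (K + 1), (K.choose m / 2 ^ K : ℝ) = 1 := by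
  simpa using sum_range_choose_div_mul_pow (𝕜 := ℝ) K 1

theorem one_div_card_mul_sq_le_sum_sq {ι : Type*} {s : Finset ι} {w x : ι → ℝ} {A : ℝ}
    (hA : 0 < A) (hw1 : ∑ i ∈ s, w i = 1) (hw : ∀ i ∈ s, 0 ≤ w i)
    (hx : ∀ i ∈ s, w i / A ≤ x i) : 1 / (s.card * A ^ 2) ≤ ∑ i ∈ s, x i ^ 2 := by
  have hcs := sq_sum_le_card_mul_sum_sq (s := s) (f := fun i => w i / A)
  rw [← Finset.sum_div, hw1] at hcs
  have hmono : ∑ i ∈ s, (w i / A) ^ 2 ≤ ∑ i ∈ s, x i ^ 2 :=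
    Finset.sum_le_sum fun i hi => pow_le_pow_left₀ (div_nonneg (hw i hi) hA.le) (hx i hi) 2
  rcases Nat.eq_zero_or_pos s.card with hs | hs
  · rw [hs, Nat.cast_zero, zero_mul, div_zero]
    positivity
  have h := hcs.trans (mul_le_mul_of_nonneg_left hmono (Nat.cast_nonneg _))
  rw [div_pow, one_pow, div_le_iff₀ (by positivity)] at h
  rw [div_le_iff₀ (by positivity)]
  linarith

theorem tsum_int_eq_sum_range {E : Type*} [AddCommMonoid E] [TopologicalSpace E]
    {f : ℤ → E} (N : ℤ) (K : ℕ) (hf : ∀ j, f j ≠ 0 → ∃ m ≤ K, N + m = j) :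
    ∑' j, f j = ∑ m ∈ Finset.range (K + 1), f (N + m) := by
  have hinj : Function.Injective fun m : ℕ => N + m := fun m m' h => by simpa using h
  rw [← hinj.tsum_eq fun j hj => ?_]
  · refine tsum_eq_sum fun m hm => ?_
    by_contra h
    obtain ⟨m', hm', hj⟩ := hf _ h
    simp only [add_right_inj, Nat.cast_inj] at hj
    exact hm (Finset.mem_range.2 (by omega))
  · obtain ⟨m, -, rfl⟩ := hf j hj
    exact ⟨m, rfl⟩

theorem Complex.norm_one_sub_exp_I_mul_ofReal_div_two (θ : ℝ) :
    ‖(1 - exp (I * θ)) / 2‖ = |Real.sin (θ / 2)| := by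
  rw [norm_div, norm_sub_rev, norm_exp_I_mul_ofReal_sub_one, norm_mul]
  simp

theorem Real.abs_sin_le_sin_of_abs_le {x y : ℝ} (hxy : |x| ≤ y) (hy : y ≤ Real.pi / 2) :
    |Real.sin x| ≤ Real.sin y := by
  rw [Real.abs_sin_eq_sin_abs_of_abs_le_pi (by linarith [Real.pi_pos])]
  exact Real.sin_le_sin_of_le_of_le_pi_div_two (by linarith [abs_nonneg x, Real.pi_pos]) hy hxy

theorem exists_add_one_mul_pow_mul_lt_one {q D : ℝ} (hq0 : 0 ≤ q) (hq1 : q < 1) :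
    ∃ K : ℕ, ((K : ℝ) + 1) * q ^ K * D < 1 := by
  have hlim : Filter.Tendsto (fun K : ℕ => ((K : ℝ) + 1) * q ^ K * D) Filter.atTop (nhds 0) := by
    have := ((tendsto_self_mul_const_pow_of_lt_one hq0 hq1).add
      (tendsto_pow_atTop_nhds_zero_of_lt_one hq0 hq1)).mul_const D
    simpa [add_mul] using this
  exact (hlim.eventually (gt_mem_nhds one_pos)).exists

section Eigenvalues

variable {ρ u b μ : ℝ} {n : ℤ}

theorem nuH_im_of_le (hn : 4 * b * ρ ≤ μ ^ 2 * (n : ℝ) ^ 2) : (nuH ρ u b μ n).im = u * n := by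
  rw [nuH, if_pos hn]
  simp only [add_im, ofReal_im, mul_im, I_re, I_im, ofReal_re]
  ring

theorem nuH_re_add_eq (hμ : 0 < μ) (hn0 : 0 < n)
    (hn : 4 * b * ρ ≤ μ ^ 2 * (n : ℝ) ^ 2) :
    (nuH ρ u b μ n).re + b * ρ / μ = -(4 * b ^ 2 * ρ ^ 2 * (n : ℝ) ^ 2 /
      (μ * ((n : ℝ) * √(μ ^ 2 * (n : ℝ) ^ 2 - 4 * b * ρ) + μ * (n : ℝ) ^ 2) ^ 2)) := by
  have hx : (0 : ℝ) < n := by exact_mod_cast hn0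
  set s := (n : ℝ) * √(μ ^ 2 * (n : ℝ) ^ 2 - 4 * b * ρ)
  have hs2 : s ^ 2 = μ ^ 2 * (n : ℝ) ^ 4 - 4 * b * ρ * (n : ℝ) ^ 2 := by
    rw [mul_pow, Real.sq_sqrt (by linarith)]; ring
  have hpos : 0 < s + μ * (n : ℝ) ^ 2 := by positivity
  have hre : (nuH ρ u b μ n).re = (-(μ * (n : ℝ) ^ 2) + s) / 2 := by
    rw [nuH, if_pos hn]
    simp only [add_re, ofReal_re, mul_re, I_re, I_im, ofReal_im, abs_of_pos hx, s]
    ring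
  rw [hre]
  field_simp
  linear_combination (μ * s + μ ^ 2 * (n : ℝ) ^ 2 + 2 * b * ρ) * hs2

variable (hμ : 0 < μ) (hn0 : 0 < n) (hn : 4 * b * ρ ≤ μ ^ 2 * (n : ℝ) ^ 2)
include hμ hn0 hn

theorem nuH_re_add_nonpos : (nuH ρ u b μ n).re + b * ρ / μ ≤ 0 := by
  rw [nuH_re_add_eq hμ hn0 hn, neg_nonpos]
  positivity

theorem abs_nuH_re_add_le :
    |(nuH ρ u b μ n).re + b * ρ / μ| ≤ 4 * b ^ 2 * ρ ^ 2 / (μ ^ 3 * (n : ℝ) ^ 2) := by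
  have hx : (0 : ℝ) < n := by exact_mod_cast hn0
  rw [nuH_re_add_eq hμ hn0 hn, abs_neg, abs_of_nonneg (by positivity)]
  calc _ ≤ 4 * b ^ 2 * ρ ^ 2 * (n : ℝ) ^ 2 / (μ * (μ * (n : ℝ) ^ 2) ^ 2) := by
        gcongr
        exact le_add_of_nonneg_left (by positivity)
    _ = 4 * b ^ 2 * ρ ^ 2 / (μ ^ 3 * (n : ℝ) ^ 2) := by field_simp

theorem nu2_ne_zero (hρ : 0 < ρ) (hb : 0 < b) : nu2 ρ u b μ n ≠ 0 := by
  have hre : (nuH ρ u b μ n).re < 0 := by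
    linarith [nuH_re_add_nonpos (u := u) hμ hn0 hn, show 0 < b * ρ / μ by positivity]
  refine div_ne_zero (fun h => by simp [h] at hre) (mul_ne_zero I_ne_zero ?_)
  exact_mod_cast hn0.ne'

theorem norm_nu2_le (hρ : 0 < ρ) (hu : 0 ≤ u) (hb : 0 < b) (hn1 : 1 ≤ n) :
    ‖nu2 ρ u b μ n‖ ≤ u + 2 * (b * ρ / μ) := by
  have hx : (1 : ℝ) ≤ n := by exact_mod_cast hn1
  have hdefect : 4 * b ^ 2 * ρ ^ 2 / (μ ^ 3 * (n : ℝ) ^ 2) ≤ b * ρ / μ := by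
    rw [div_le_div_iff₀ (by positivity) hμ]
    nlinarith [mul_le_mul_of_nonneg_left hn (by positivity : 0 ≤ b * ρ * μ)]
  have hre : |(nuH ρ u b μ n).re| ≤ 2 * (b * ρ / μ) := by
    have := (abs_nuH_re_add_le (u := u) hμ hn0 hn).trans hdefect
    rw [abs_le] at this ⊢
    constructor <;> linarith [show 0 < b * ρ / μ by positivity]
  have hnorm : ‖nuH ρ u b μ n‖ ≤ (u + 2 * (b * ρ / μ)) * n := calc
    _ ≤ |(nuH ρ u b μ n).re| + |(nuH ρ u b μ n).im| := norm_le_abs_re_add_abs_im _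
    _ ≤ 2 * (b * ρ / μ) + u * n := by
        rw [nuH_im_of_le hn, abs_of_nonneg (a := u * n) (by positivity)]; linarith
    _ ≤ (u + 2 * (b * ρ / μ)) * n := by nlinarith [show 0 ≤ b * ρ / μ by positivity]
  rw [nu2, norm_div, norm_mul, norm_I, one_mul, norm_intCast, abs_of_pos (by linarith),
    div_le_iff₀ (by linarith)]
  exact hnorm

end Eigenvalues

noncomputable def phasedBinomialWeight (u T : ℝ) (K m : ℕ) : ℂ :=
  (K.choose m / 2 ^ K : ℂ) * (-exp (-(I * (u * T / 2)))) ^ m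

section PhasedBinomialWeight

variable {u T : ℝ} {K : ℕ}

theorem norm_phasedBinomialWeight (m : ℕ) :
    ‖phasedBinomialWeight u T K m‖ = K.choose m / 2 ^ K := by
  rw [phasedBinomialWeight, norm_mul, norm_pow, norm_neg, norm_exp]
  simp

theorem phasedBinomialWeight_eq_zero_of_lt {m : ℕ} (h : K < m) :
    phasedBinomialWeight u T K m = 0 := by
  simp [phasedBinomialWeight, Nat.choose_eq_zero_of_lt h]

theorem sum_phasedBinomialWeight_mul_exp (τ : ℝ) :
    ∑ m ∈ Finset.range (K + 1), phasedBinomialWeight u T K m * exp (I * (u * m * τ))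
      = ((1 - exp (I * ↑(u * (τ - T / 2)))) / 2) ^ K := by
  rw [sub_eq_add_neg, ← sum_range_choose_div_mul_pow]
  refine Finset.sum_congr rfl fun m _ => ?_
  have hphase : -exp (I * ↑(u * (τ - T / 2))) = -exp (-(I * (u * T / 2))) * exp (I * (u * τ)) := by
    rw [neg_mul, ← exp_add]
    push_cast
    ring_nf
  rw [phasedBinomialWeight, hphase, mul_pow, ← exp_nat_mul (I * _), mul_assoc]
  ring_nf

theorem norm_sum_phasedBinomialWeight_mul_exp_le (hu : 0 ≤ u) (huT : u * T ≤ 2 * Real.pi)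
    {τ : ℝ} (hτ : τ ∈ Set.Icc 0 T) :
    ‖∑ m ∈ Finset.range (K + 1), phasedBinomialWeight u T K m * exp (I * (u * m * τ))‖
      ≤ Real.sin (u * T / 4) ^ K := by
  rw [sum_phasedBinomialWeight_mul_exp, norm_pow, norm_one_sub_exp_I_mul_ofReal_div_two]
  refine pow_le_pow_left₀ (abs_nonneg _) (Real.abs_sin_le_sin_of_abs_le ?_ (by linarith)) K
  rw [abs_le]
  constructor <;> nlinarith [hτ.1, hτ.2]

theorem norm_sum_phasedBinomialWeight_mul_exp_le_of_re (hu : 0 ≤ u) (huT : u * T ≤ 2 * Real.pi)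
    {r ξ ε τ : ℝ} (hr : 0 ≤ r) (hτ : τ ∈ Set.Icc 0 T) (z : ℕ → ℂ) (hre : ∀ m, (z m).re ≤ 0)
    (him : ∀ m, (z m).im = ξ + u * m) (hε : ∀ m, |(z m).re + r| ≤ ε) :
    ‖∑ m ∈ Finset.range (K + 1), phasedBinomialWeight u T K m * exp (z m * τ)‖
      ≤ ε * T + Real.sin (u * T / 4) ^ K := by
  set z₀ : ℂ := -r + I * ξ
  have hz₀ : z₀.re ≤ 0 := by simpa [z₀] using hr
  have hε0 : 0 ≤ ε := (abs_nonneg _).trans (hε 0)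
  have hmain : ‖∑ m ∈ Finset.range (K + 1),
      phasedBinomialWeight u T K m * (exp (z₀ * τ) * exp (I * (u * m * τ)))‖
        ≤ Real.sin (u * T / 4) ^ K := by
    simp_rw [mul_left_comm _ (exp (z₀ * τ)), ← Finset.mul_sum, norm_mul]
    refine (mul_le_of_le_one_left (norm_nonneg _) ?_).trans
      (norm_sum_phasedBinomialWeight_mul_exp_le hu huT hτ)
    rw [norm_exp]
    exact Real.exp_le_one_iff.2 (by simpa using mul_nonpos_of_nonpos_of_nonneg hz₀ hτ.1)
  have hterm : ∀ m, ‖exp (z m * τ) - exp (z₀ * τ) * exp (I * (u * m * τ))‖ ≤ ε * T := by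
    intro m
    have hdiff : z m * τ - (z₀ * τ + I * (u * m * τ)) = ↑(((z m).re + r) * τ) := by
      conv_lhs => rw [← re_add_im (z m), him m]
      push_cast
      ring
    rw [← exp_add]
    refine (norm_exp_sub_exp_le_of_re_nonpos ?_ ?_).trans ?_
    · simpa using mul_nonpos_of_nonpos_of_nonneg (hre m) hτ.1
    · simpa using mul_nonpos_of_nonpos_of_nonneg hz₀ hτ.1
    · rw [hdiff, norm_real, Real.norm_eq_abs, abs_mul, abs_of_nonneg hτ.1]
      exact mul_le_mul (hε m) hτ.2 hτ.1 hε0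
  have hpert : ‖∑ m ∈ Finset.range (K + 1), phasedBinomialWeight u T K m * exp (z m * τ)
      - ∑ m ∈ Finset.range (K + 1),
        phasedBinomialWeight u T K m * (exp (z₀ * τ) * exp (I * (u * m * τ)))‖ ≤ ε * T := by
    rw [← Finset.sum_sub_distrib]
    refine (norm_sum_le _ _).trans ?_
    calc _ ≤ ∑ m ∈ Finset.range (K + 1), (K.choose m / 2 ^ K : ℝ) * (ε * T) := by
          refine Finset.sum_le_sum fun m _ => ?_
          rw [← mul_sub, norm_mul, norm_phasedBinomialWeight]
          exact mul_le_mul_of_nonneg_left (hterm m) (by positivity)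
      _ = ε * T := by rw [← Finset.sum_mul, sum_range_choose_div_two_pow, one_mul]
  linarith [norm_sub_norm_le
    (∑ m ∈ Finset.range (K + 1), phasedBinomialWeight u T K m * exp (z m * τ))
    (∑ m ∈ Finset.range (K + 1),
      phasedBinomialWeight u T K m * (exp (z₀ * τ) * exp (I * (u * m * τ))))]

end PhasedBinomialWeight

-- Vanishes beyond `N + K`, where `K.choose m = 0`.
noncomputable def testFamily (ρ u b μ T : ℝ) (N K : ℕ) (j : ℤ) : ℂ :=
  if (N : ℤ) ≤ j then phasedBinomialWeight u T K (j - N).toNat / (ρ * nu2 ρ u b μ j) else 0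

section TestFamily

variable {ρ u b μ T : ℝ} {N K : ℕ}

theorem testFamily_natCast_add (m : ℕ) :
    testFamily ρ u b μ T N K (N + m)
      = phasedBinomialWeight u T K m / (ρ * nu2 ρ u b μ (N + m)) := by
  simp [testFamily]

theorem exists_eq_of_testFamily_ne_zero {j : ℤ} (h : testFamily ρ u b μ T N K j ≠ 0) :
    ∃ m ≤ K, (N : ℤ) + m = j := by
  unfold testFamily at h
  split_ifs at h with hj
  · refine ⟨(j - N).toNat, ?_, by omega⟩
    by_contra hK
    exact h (by rw [phasedBinomialWeight_eq_zero_of_lt (by omega), zero_div])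
  · exact absurd rfl h

theorem testFamily_finite_support : (Function.support (testFamily ρ u b μ T N K)).Finite :=
  ((Finset.range (K + 1)).finite_toSet.image fun m : ℕ => (N : ℤ) + m).subset fun j hj => by
    obtain ⟨m, hm, rfl⟩ := exists_eq_of_testFamily_ne_zero hj
    exact ⟨m, Finset.mem_range.2 (by omega), rfl⟩

theorem testFamily_zero (hN : 1 ≤ N) : testFamily ρ u b μ T N K 0 = 0 := by
  by_contra h
  obtain ⟨m, -, hm⟩ := exists_eq_of_testFamily_ne_zero h
  omega

end TestFamily

section Observation

variable {ρ u b μ T : ℝ} {N K : ℕ}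
variable (hρ : 0 < ρ) (hb : 0 < b) (hμ : 0 < μ) (hN1 : 1 ≤ N) (hN : 4 * b * ρ ≤ μ ^ 2 * (N : ℝ) ^ 2)
include hρ hb hμ hN1 hN

omit hρ hb hμ in
theorem one_le_natCast_add_and_le_sq (m : ℕ) :
    1 ≤ (N : ℤ) + m ∧ 4 * b * ρ ≤ μ ^ 2 * (((N + m : ℤ)) : ℝ) ^ 2 := by
  refine ⟨by omega, hN.trans ?_⟩
  push_cast
  gcongr
  linarith [(Nat.cast_nonneg m : (0 : ℝ) ≤ m)]

theorem tsum_testFamily_mul_exp (z : ℂ) :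
    ∑' j, testFamily ρ u b μ T N K j * (ρ * nu2 ρ u b μ j) * exp (nuH ρ u b μ j * z)
      = ∑ m ∈ Finset.range (K + 1),
          phasedBinomialWeight u T K m * exp (nuH ρ u b μ (N + m) * z) := by
  rw [tsum_int_eq_sum_range N K fun j hj =>
    exists_eq_of_testFamily_ne_zero (left_ne_zero_of_mul (left_ne_zero_of_mul hj))]
  refine Finset.sum_congr rfl fun m _ => ?_
  obtain ⟨hm1, hm⟩ := one_le_natCast_add_and_le_sq hN1 hN m
  rw [testFamily_natCast_add, div_mul_cancel₀ _
    (mul_ne_zero (ofReal_ne_zero.2 hρ.ne') (nu2_ne_zero hμ (by omega) hm hρ hb))]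

theorem one_div_le_tsum_norm_sq_testFamily (hu : 0 ≤ u) :
    1 / ((K + 1) * (ρ * (u + 2 * (b * ρ / μ))) ^ 2)
      ≤ ∑' j, ‖testFamily ρ u b μ T N K j‖ ^ 2 := by
  rw [tsum_int_eq_sum_range N K fun j hj =>
    exists_eq_of_testFamily_ne_zero (by simpa using hj)]
  have hcard : ((Finset.range (K + 1)).card : ℝ) = K + 1 := by simp
  rw [← hcard]
  refine one_div_card_mul_sq_le_sum_sq (by positivity) (sum_range_choose_div_two_pow K)
    (fun m _ => by positivity) fun m _ => ?_
  obtain ⟨hm1, hm⟩ := one_le_natCast_add_and_le_sq hN1 hN m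
  rw [testFamily_natCast_add, norm_div, norm_phasedBinomialWeight, norm_mul, norm_real,
    Real.norm_of_nonneg hρ.le]
  exact div_le_div_of_nonneg_left (by positivity)
    (mul_pos hρ (norm_pos_iff.2 (nu2_ne_zero hμ (by omega) hm hρ hb)))
    (mul_le_mul_of_nonneg_left (norm_nu2_le hμ (by omega) hm hρ hu hb hm1) hρ.le)

theorem integral_norm_sq_sum_le (hu : 0 ≤ u) (hT : 0 ≤ T) (huT : u * T ≤ 2 * Real.pi) :
    ∫ t in (0 : ℝ)..T, ‖∑ m ∈ Finset.range (K + 1),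
        phasedBinomialWeight u T K m * exp (nuH ρ u b μ (N + m) * ((T : ℂ) - (t : ℂ)))‖ ^ 2
      ≤ T * (4 * b ^ 2 * ρ ^ 2 / (μ ^ 3 * (N : ℝ) ^ 2) * T + Real.sin (u * T / 4) ^ K) ^ 2 := by
  set B := 4 * b ^ 2 * ρ ^ 2 / (μ ^ 3 * (N : ℝ) ^ 2) * T + Real.sin (u * T / 4) ^ K
  have hpoint : ∀ t ∈ Set.uIoc 0 T, ‖∑ m ∈ Finset.range (K + 1),
      phasedBinomialWeight u T K m * exp (nuH ρ u b μ (N + m) * ((T : ℂ) - (t : ℂ)))‖ ≤ B := by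
    intro t ht
    rw [Set.uIoc_of_le hT] at ht
    have hcast : (T : ℂ) - (t : ℂ) = ((T - t : ℝ) : ℂ) := by push_cast; rfl
    simp_rw [hcast]
    refine norm_sum_phasedBinomialWeight_mul_exp_le_of_re hu huT (ξ := u * N)
      (by positivity : 0 ≤ b * ρ / μ) ⟨by linarith [ht.2], by linarith [ht.1]⟩ _
      (fun m => ?_) (fun m => ?_) (fun m => ?_)
    all_goals obtain ⟨hm1, hm⟩ := one_le_natCast_add_and_le_sq hN1 hN m
    · linarith [nuH_re_add_nonpos (u := u) hμ (by omega) hm, show 0 < b * ρ / μ by positivity]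
    · rw [nuH_im_of_le hm]; push_cast; ring
    · refine (abs_nuH_re_add_le hμ (by omega) hm).trans ?_
      have : (1 : ℝ) ≤ N := by exact_mod_cast hN1
      gcongr
      push_cast
      linarith [(Nat.cast_nonneg m : (0 : ℝ) ≤ m)]
  refine (le_abs_self _).trans ?_
  rw [← Real.norm_eq_abs]
  refine (intervalIntegral.norm_integral_le_of_norm_le_const (C := B ^ 2) fun t ht => ?_).trans_eq
    (by rw [sub_zero, abs_of_nonneg hT, mul_comm])
  rw [norm_pow, norm_norm]
  exact pow_le_pow_left₀ (norm_nonneg _) (hpoint t ht) 2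

end Observation

theorem exists_family_observation_le {ρ u b μ T : ℝ} (hρ : 0 < ρ) (hu : 0 ≤ u) (hb : 0 < b)
    (hμ : 0 < μ) (hT : 0 ≤ T) (huT : u * T ≤ 2 * Real.pi) (K : ℕ) (hq : 0 < Real.sin (u * T / 4)) :
    ∃ a : ℤ → ℂ, (Function.support a).Finite ∧ a 0 = 0 ∧
      1 / ((K + 1) * (ρ * (u + 2 * (b * ρ / μ))) ^ 2) ≤ ∑' j, ‖a j‖ ^ 2 ∧
      ∫ t in (0 : ℝ)..T, ‖∑' j, a j * ((ρ : ℂ) * nu2 ρ u b μ j)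
          * exp (nuH ρ u b μ j * ((T : ℂ) - (t : ℂ)))‖ ^ 2
        ≤ T * (2 * Real.sin (u * T / 4) ^ K) ^ 2 := by
  have hsq : Filter.Tendsto (fun N : ℕ => (N : ℝ) ^ 2) Filter.atTop Filter.atTop :=
    (Filter.tendsto_pow_atTop two_ne_zero).comp tendsto_natCast_atTop_atTop
  have hdefect : Filter.Tendsto (fun N : ℕ => 4 * b ^ 2 * ρ ^ 2 / (μ ^ 3 * (N : ℝ) ^ 2) * T)
      Filter.atTop (nhds 0) := by
    simpa using (tendsto_const_nhds.div_atTop (hsq.const_mul_atTop (by positivity))).mul_const T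
  obtain ⟨N, hN1, hN, hdefectN⟩ := ((Filter.eventually_ge_atTop 1).and
    (((hsq.const_mul_atTop (by positivity : 0 < μ ^ 2)).eventually_ge_atTop (4 * b * ρ)).and
      (hdefect.eventually (ge_mem_nhds (pow_pos hq K))))).exists
  refine ⟨testFamily ρ u b μ T N K, testFamily_finite_support, testFamily_zero hN1,
    one_div_le_tsum_norm_sq_testFamily hρ hb hμ hN1 hN hu, ?_⟩
  simp_rw [tsum_testFamily_mul_exp hρ hb hμ hN1 hN]
  refine (integral_norm_sq_sum_le hρ hb hμ hN1 hN hu hT huT).trans ?_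
  gcongr
  linarith

/-- Lack of null controllability in density at small time `0 < T < 2π/ū`: there is no
constant `C > 0` such that for every finitely supported family `(a_n)` indexed by the
nonzero integers, `Σ|a_n|² ≤ C·∫₀ᵀ |Σ a_n ρ̄ν₂ⁿ e^{ν_n^h(T−t)}|² dt`. -/
theorem lack_of_null_controllability_density_small_time (ρ u b μ : ℝ) (hρ : 0 < ρ)
    (hu : 0 < u) (hb : 0 < b) (hμ : 0 < μ) (T : ℝ) (hT0 : 0 < T)
    (hT : T < 2 * Real.pi / u) :
    ¬∃ C > 0, ∀ a : ℤ → ℂ, (Function.support a).Finite → a 0 = 0 →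
      (∑' n : ℤ, ‖a n‖ ^ 2) ≤
        C * ∫ t in (0 : ℝ)..T,
          ‖∑' n : ℤ, a n * ((ρ : ℂ) * nu2 ρ u b μ n)
            * Complex.exp (nuH ρ u b μ n * ((T : ℂ) - (t : ℂ)))‖ ^ 2 := by
  rintro ⟨C, hC, hobs⟩
  have huT : u * T < 2 * Real.pi := by rwa [lt_div_iff₀ hu, mul_comm] at hT
  set q := Real.sin (u * T / 4)
  have hq0 : 0 < q := Real.sin_pos_of_pos_of_lt_pi (by positivity) (by linarith [Real.pi_pos])
  have hq1 : q < 1 := by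
    rw [← Real.sin_pi_div_two]
    exact Real.sin_lt_sin_of_lt_of_le_pi_div_two (by linarith [Real.pi_pos, mul_pos hu hT0])
      le_rfl (by linarith)
  set M := ρ * (u + 2 * (b * ρ / μ))
  obtain ⟨K, hK⟩ := exists_add_one_mul_pow_mul_lt_one (D := 4 * C * T * M ^ 2) (sq_nonneg q)
    (by nlinarith : q ^ 2 < 1)
  obtain ⟨a, ha_fin, ha0, hlow, hint⟩ :=
    exists_family_observation_le hρ hu.le hb hμ hT0.le huT.le K hq0
  have hchain := (hlow.trans (hobs a ha_fin ha0)).trans (mul_le_mul_of_nonneg_left hint hC.le)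
  rw [div_le_iff₀ (by positivity)] at hchain
  have hrw : C * (T * (2 * q ^ K) ^ 2) * ((K + 1) * M ^ 2)
      = ((K : ℝ) + 1) * (q ^ 2) ^ K * (4 * C * T * M ^ 2) := by ring
  linarith
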